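/- arXiv:1803.10815 — 3 statements merged into one kernel-verified Lean document; each statement's English description precedes it below -/
import Mathlib

section
/- If err(h, h', X) ≤ ε₁ and err(h, h', X_cf) ≤ ε₂, where X_cf is the counterfactual distribution, then the causal influences satisfy |ι(h) - ι(h')| ≤ ε₁ + ε₂. -/
/-! Wherever `h` and `h'` agree at both `X ω` and `Xcf ω`, the events defining `ι(h)` and `ι(h')`
coincide, so the two influences differ by at most the probability of the union of the two error
events, which the union bound controls by `ε₁ + ε₂`. -/

open Finset

/-- Probability of an event under weights `p` on a finite space. -/
noncomputable def Pr {Ω : Type*} [Fintype Ω] (p : Ω → ℝ) (E : Ω → Prop) [DecidablePred E] : ℝ :=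
  ∑ ω, if E ω then p ω else 0

section Pr

variable {Ω : Type*} [Fintype Ω] {p : Ω → ℝ} {E F : Ω → Prop} [DecidablePred E] [DecidablePred F]

theorem Pr_mono (hp : ∀ ω, 0 ≤ p ω) (hEF : ∀ ω, E ω → F ω) : Pr p E ≤ Pr p F :=
  sum_le_sum fun ω _ => by
    have := hEF ω
    by_cases hE : E ω <;> by_cases hF : F ω <;> simp_all

theorem Pr_or_le (hp : ∀ ω, 0 ≤ p ω) : Pr p (fun ω => E ω ∨ F ω) ≤ Pr p E + Pr p F := by
  rw [Pr, Pr, Pr, ← sum_add_distrib]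
  refine sum_le_sum fun ω _ => ?_
  have := hp ω
  by_cases hE : E ω <;> by_cases hF : F ω <;> simp [hE, hF, this]

theorem abs_Pr_sub_Pr_le (hp : ∀ ω, 0 ≤ p ω) :
    |Pr p E - Pr p F| ≤ Pr p (fun ω => ¬(E ω ↔ F ω)) := by
  rw [Pr, Pr, Pr, ← sum_sub_distrib]
  refine (abs_sum_le_sum_abs _ _).trans (sum_le_sum fun ω _ => ?_)
  by_cases hE : E ω <;> by_cases hF : F ω <;> simp [hE, hF, abs_of_nonneg (hp ω)]

end Pr

theorem relating_counterfactual_and_true_accuracies_general {Ω 𝒳 : Type*} [Fintype Ω]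
    (p : Ω → ℝ) (hp : ∀ ω, 0 ≤ p ω)
    (X Xcf : Ω → 𝒳) (h h' : 𝒳 → Bool) (ε₁ ε₂ : ℝ)
    (herr1 : Pr p (fun ω => h (X ω) ≠ h' (X ω)) ≤ ε₁)
    (herr2 : Pr p (fun ω => h (Xcf ω) ≠ h' (Xcf ω)) ≤ ε₂) :
    |Pr p (fun ω => h (X ω) ≠ h (Xcf ω)) - Pr p (fun ω => h' (X ω) ≠ h' (Xcf ω))|
      ≤ ε₁ + ε₂ := by
  have influences_differ_only_on_errors : ∀ ω,
      ¬(h (X ω) ≠ h (Xcf ω) ↔ h' (X ω) ≠ h' (Xcf ω)) →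
        h (X ω) ≠ h' (X ω) ∨ h (Xcf ω) ≠ h' (Xcf ω) := by
    intro ω hne
    by_contra! hagree
    exact hne (by rw [hagree.1, hagree.2])
  calc _ ≤ Pr p (fun ω => ¬(h (X ω) ≠ h (Xcf ω) ↔ h' (X ω) ≠ h' (Xcf ω))) := abs_Pr_sub_Pr_le hp
    _ ≤ Pr p (fun ω => h (X ω) ≠ h' (X ω) ∨ h (Xcf ω) ≠ h' (Xcf ω)) :=
        Pr_mono hp influences_differ_only_on_errors
    _ ≤ Pr p (fun ω => h (X ω) ≠ h' (X ω)) + Pr p (fun ω => h (Xcf ω) ≠ h' (Xcf ω)) :=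
        Pr_or_le hp
    _ ≤ ε₁ + ε₂ := add_le_add herr1 herr2

/-- Theorem 2: if `err(h,h',X) ≤ ε₁` and `err(h,h',X_cf) ≤ ε₂` then
`|ι(h) - ι(h')| ≤ ε₁ + ε₂`. -/
theorem relating_counterfactual_and_true_accuracies {Ω 𝒳 : Type*} [Fintype Ω]
    (p : Ω → ℝ) (hp : ∀ ω, 0 ≤ p ω) (hsum : ∑ ω, p ω = 1)
    (X Xcf : Ω → 𝒳) (h h' : 𝒳 → Bool) (ε₁ ε₂ : ℝ)
    (herr1 : Pr p (fun ω => h (X ω) ≠ h' (X ω)) ≤ ε₁)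
    (herr2 : Pr p (fun ω => h (Xcf ω) ≠ h' (Xcf ω)) ≤ ε₂) :
    |Pr p (fun ω => h (X ω) ≠ h (Xcf ω)) - Pr p (fun ω => h' (X ω) ≠ h' (Xcf ω))|
      ≤ ε₁ + ε₂ :=
  relating_counterfactual_and_true_accuracies_general p hp X Xcf h h' ε₁ ε₂ herr1 herr2
end

section
/- Under the hypotheses of Theorem 1, the expected influence over the uniform distribution on classifiers agreeing with h off φ is at least γ/2: E_{h₁}[P(h₁(X) ≠ h₁(X_cf))] ≥ γ/2 where γ = P(φ(X_cf) ∧ ¬φ(X)). -/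
open Finset
open scoped Classical

/-- Expected influence, over the uniform distribution on the set `S` of classifiers
agreeing with `h` off `φ`, is at least `γ/2` where `γ = P(φ(X_cf) ∧ ¬φ(X))`. -/
theorem expected_influence_ge {Ω 𝒳 : Type*} [Fintype Ω] [Fintype 𝒳] [DecidableEq 𝒳]
    (p : Ω → ℝ) (hp : ∀ ω, 0 ≤ p ω) (hsum : ∑ ω, p ω = 1)
    (X Xcf : Ω → 𝒳) (h : 𝒳 → Bool) (φ : 𝒳 → Prop) [DecidablePred φ] (γ : ℝ)
    (hγ : Pr p (fun ω => φ (Xcf ω) ∧ ¬φ (X ω)) = γ) :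
    γ / 2 ≤
      (1 / ((Finset.univ.filter (fun g : 𝒳 → Bool => ∀ x, ¬φ x → g x = h x)).card : ℝ)) *
        ∑ g ∈ Finset.univ.filter (fun g : 𝒳 → Bool => ∀ x, ¬φ x → g x = h x),
          Pr p (fun ω => g (X ω) ≠ g (Xcf ω)) := by
  classical
  set S := Finset.univ.filter (fun g : 𝒳 → Bool => ∀ x, ¬φ x → g x = h x) with hSdef
  clear_value S
  have hhS : h ∈ S := by simp [hSdef]
  have hScard : 0 < S.card := Finset.card_pos.mpr ⟨h, hhS⟩
  have hScardR : (0:ℝ) < (S.card : ℝ) := by exact_mod_cast hScard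
  -- counting lemma: for a with φ a, exactly half of S takes value b at a
  have key : ∀ (a : 𝒳) (b : Bool), φ a →
      (S.filter (fun g => g a = b)).card * 2 = S.card := by
    intro a b ha
    have hmem : ∀ (g : 𝒳 → Bool), g ∈ S → Function.update g a (!(g a)) ∈ S := by
      intro g hg
      simp only [hSdef, Finset.mem_filter, Finset.mem_univ, true_and] at hg ⊢
      intro x hx
      have hxa : x ≠ a := fun hxa => hx (hxa ▸ ha)
      rw [Function.update_of_ne hxa]
      exact hg x hx
    have hbij : (S.filter (fun g => g a = b)).card
        = (S.filter (fun g => g a = !b)).card := by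
      apply Finset.card_nbij' (fun g => Function.update g a (!(g a)))
        (fun g => Function.update g a (!(g a)))
      · intro g hg
        simp only [Finset.mem_coe, Finset.mem_filter] at hg ⊢
        refine ⟨hmem g hg.1, ?_⟩
        simp [hg.2]
      · intro g hg
        simp only [Finset.mem_coe, Finset.mem_filter] at hg ⊢
        refine ⟨hmem g hg.1, ?_⟩
        simp [hg.2]
      · intro g hg
        simp [Function.update_idem]
      · intro g hg
        simp [Function.update_idem]
    have hsplit : (S.filter (fun g => g a = b)).card
        + (S.filter (fun g => ¬ (g a = b))).card = S.card :=
      Finset.card_filter_add_card_filter_not (s := S) (fun g => g a = b)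
    have hneg : (S.filter (fun g => ¬ (g a = b))) = (S.filter (fun g => g a = !b)) := by
      ext g
      simp only [Finset.mem_filter, and_congr_right_iff]
      intro _
      cases b <;> simp
    have hcn : (S.filter (fun g => ¬ (g a = b))).card = (S.filter (fun g => g a = !b)).card :=
      congrArg Finset.card hneg
    calc (S.filter (fun g => g a = b)).card * 2
        = (S.filter (fun g => g a = b)).card + (S.filter (fun g => g a = !b)).card := by
          rw [mul_two, hbij]
      _ = S.card := by rw [← hcn]; exact hsplit
  -- swap sums
  have hswap : ∑ g ∈ S, Pr p (fun ω => g (X ω) ≠ g (Xcf ω))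
      = ∑ ω, ((S.filter (fun g => g (X ω) ≠ g (Xcf ω))).card : ℝ) * p ω := by
    unfold Pr
    rw [Finset.sum_comm]
    refine Finset.sum_congr rfl (fun ω _ => ?_)
    have h1 : (∑ g ∈ S, if g (X ω) ≠ g (Xcf ω) then p ω else 0)
        = ∑ g ∈ S.filter (fun g => g (X ω) ≠ g (Xcf ω)), p ω :=
      (Finset.sum_filter _ _).symm
    rw [h1, Finset.sum_const, nsmul_eq_mul]
  rw [hswap, ← hγ]
  unfold Pr
  rw [div_eq_mul_one_div, mul_comm, Finset.mul_sum, Finset.mul_sum]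
  apply Finset.sum_le_sum
  intro ω _
  by_cases hev : φ (Xcf ω) ∧ ¬φ (X ω)
  · rw [if_pos hev]
    have hkey := key (Xcf ω) (!h (X ω)) hev.1
    have hsub : S.filter (fun g => g (Xcf ω) = !h (X ω)) ⊆ S.filter (fun g => g (X ω) ≠ g (Xcf ω)) := by
      intro g hg
      rw [Finset.mem_filter] at hg
      rw [Finset.mem_filter]
      refine ⟨hg.1, ?_⟩
      have hgS := hg.1
      rw [hSdef, Finset.mem_filter] at hgS
      have hx : g (X ω) = h (X ω) := hgS.2 (X ω) hev.2
      rw [hx, hg.2]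
      simp
    have hcard : S.card ≤ 2 * (S.filter (fun g => g (X ω) ≠ g (Xcf ω))).card := by
      have h2 := Finset.card_le_card hsub
      calc S.card = (S.filter (fun g => g (Xcf ω) = !h (X ω))).card * 2 := hkey.symm
        _ ≤ (S.filter (fun g => g (X ω) ≠ g (Xcf ω))).card * 2 := Nat.mul_le_mul_right 2 h2
        _ = 2 * (S.filter (fun g => g (X ω) ≠ g (Xcf ω))).card := Nat.mul_comm _ _
    have hcardR : (S.card : ℝ) ≤ 2 * ((S.filter (fun g => g (X ω) ≠ g (Xcf ω))).card : ℝ) := by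
      exact_mod_cast hcard
    calc (1/2) * p ω = (1 / (S.card : ℝ)) * ((S.card : ℝ) / 2 * p ω) := by
          field_simp
      _ ≤ (1 / (S.card : ℝ)) * (((S.filter (fun g => g (X ω) ≠ g (Xcf ω))).card : ℝ) * p ω) := by
          apply mul_le_mul_of_nonneg_left _ (by positivity)
          exact mul_le_mul_of_nonneg_right (by linarith) (hp ω)
  · rw [if_neg hev]
    have : (0:ℝ) ≤ ((S.filter (fun g => g (X ω) ≠ g (Xcf ω))).card : ℝ) * p ω :=
      mul_nonneg (Nat.cast_nonneg _) (hp ω)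
    have h0 : (0:ℝ) ≤ 1 / (S.card : ℝ) := by positivity
    nlinarith
end

section
/- Under the hypotheses of Theorem 1, the expected influence over the uniform distribution on classifiers agreeing with h off φ is at most 1 - γ/2. -/
open Finset
open scoped Classical

lemma half_count {𝒳 : Type*} [Fintype 𝒳] [DecidableEq 𝒳]
    (h : 𝒳 → Bool) (φ : 𝒳 → Prop) [DecidablePred φ]
    (a x₀ : 𝒳) (ha : ¬φ a) (hx₀ : φ x₀) :
    2 * ((Finset.univ.filter (fun g : 𝒳 → Bool => ∀ x, ¬φ x → g x = h x)).filter
        (fun g => ¬(g a = g x₀))).card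
      = (Finset.univ.filter (fun g : 𝒳 → Bool => ∀ x, ¬φ x → g x = h x)).card := by
  classical
  set S := Finset.univ.filter (fun g : 𝒳 → Bool => ∀ x, ¬φ x → g x = h x) with hSdef
  have hax : a ≠ x₀ := by intro e; rw [e] at ha; exact ha hx₀
  have hmem : ∀ g : 𝒳 → Bool, g ∈ S → Function.update g x₀ (!(g x₀)) ∈ S := by
    intro g hg
    simp only [hSdef, Finset.mem_filter, Finset.mem_univ, true_and] at hg ⊢
    intro x hx
    have hxx : x ≠ x₀ := by intro e; rw [e] at hx; exact hx hx₀
    rw [Function.update_of_ne hxx]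
    exact hg x hx
  have hinv : ∀ g : 𝒳 → Bool,
      Function.update (Function.update g x₀ (!(g x₀))) x₀
        (!(Function.update g x₀ (!(g x₀)) x₀)) = g := by
    intro g
    funext x
    by_cases hx : x = x₀
    · subst hx; simp
    · simp [Function.update_of_ne hx]
  have key : (S.filter (fun g => ¬(g a = g x₀))).card
      = (S.filter (fun g => (g a = g x₀))).card := by
    refine Finset.card_nbij' (fun g => Function.update g x₀ (!(g x₀)))
      (fun g => Function.update g x₀ (!(g x₀))) ?_ ?_ ?_ ?_
    · intro g hg
      simp only [Finset.mem_coe, Finset.mem_filter] at hg ⊢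
      refine ⟨hmem g hg.1, ?_⟩
      rw [Function.update_of_ne hax, Function.update_self]
      cases hb : g x₀ <;> cases hb2 : g a <;> simp_all
    · intro g hg
      simp only [Finset.mem_coe, Finset.mem_filter] at hg ⊢
      refine ⟨hmem g hg.1, ?_⟩
      rw [Function.update_of_ne hax, Function.update_self]
      cases hb : g x₀ <;> cases hb2 : g a <;> simp_all
    · intro g _; exact hinv g
    · intro g _; exact hinv g
  have hsplit : (S.filter (fun g => (g a = g x₀))).card
      + (S.filter (fun g => ¬(g a = g x₀))).card = S.card :=
    Finset.card_filter_add_card_filter_not (fun g : 𝒳 → Bool => (g a = g x₀))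
  rw [two_mul]
  nth_rewrite 1 [key]
  exact hsplit

/-- Expected influence, over the uniform distribution on the set `S` of classifiers
agreeing with `h` off `φ`, is at most `1 - γ/2` where `γ = P(φ(X_cf) ∧ ¬φ(X))`. -/
theorem expected_influence_le {Ω 𝒳 : Type*} [Fintype Ω] [Fintype 𝒳] [DecidableEq 𝒳]
    (p : Ω → ℝ) (hp : ∀ ω, 0 ≤ p ω) (hsum : ∑ ω, p ω = 1)
    (X Xcf : Ω → 𝒳) (h : 𝒳 → Bool) (φ : 𝒳 → Prop) [DecidablePred φ] (γ : ℝ)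
    (hγ : Pr p (fun ω => φ (Xcf ω) ∧ ¬φ (X ω)) = γ) :
    (1 / ((Finset.univ.filter (fun g : 𝒳 → Bool => ∀ x, ¬φ x → g x = h x)).card : ℝ)) *
        ∑ g ∈ Finset.univ.filter (fun g : 𝒳 → Bool => ∀ x, ¬φ x → g x = h x),
          Pr p (fun ω => g (X ω) ≠ g (Xcf ω))
      ≤ 1 - γ / 2 := by
  classical
  set S := Finset.univ.filter (fun g : 𝒳 → Bool => ∀ x, ¬φ x → g x = h x) with hSdef
  have hhS : h ∈ S := by simp [hSdef]
  have hN : 0 < S.card := Finset.card_pos.mpr ⟨h, hhS⟩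
  have hNR : (0:ℝ) < (S.card : ℝ) := by exact_mod_cast hN
  have hswap : ∑ g ∈ S, Pr p (fun ω => g (X ω) ≠ g (Xcf ω))
      = ∑ ω, ((S.filter (fun g => ¬(g (X ω) = g (Xcf ω)))).card : ℝ) * p ω := by
    unfold Pr
    rw [Finset.sum_comm]
    refine Finset.sum_congr rfl fun ω _ => ?_
    rw [← Finset.sum_filter, Finset.sum_const, nsmul_eq_mul]
  have hbound : ∀ ω, ((S.filter (fun g => ¬(g (X ω) = g (Xcf ω)))).card : ℝ) * p ω
      ≤ ((if φ (Xcf ω) ∧ ¬φ (X ω) then (1/2 : ℝ) else 1) * (S.card : ℝ)) * p ω := by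
    intro ω
    apply mul_le_mul_of_nonneg_right _ (hp ω)
    split_ifs with hc
    · have h2 := half_count h φ (X ω) (Xcf ω) hc.2 hc.1
      have h2R : 2 * ((S.filter (fun g => ¬(g (X ω) = g (Xcf ω)))).card : ℝ) = (S.card : ℝ) := by
        exact_mod_cast h2
      linarith
    · have hle : (S.filter (fun g => ¬(g (X ω) = g (Xcf ω)))).card ≤ S.card :=
        Finset.card_filter_le _ _
      have : ((S.filter (fun g => ¬(g (X ω) = g (Xcf ω)))).card : ℝ) ≤ (S.card : ℝ) := by
        exact_mod_cast hle
      linarith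
  have hsum2 : ∑ ω, ((if φ (Xcf ω) ∧ ¬φ (X ω) then (1/2 : ℝ) else 1) * (S.card : ℝ)) * p ω
      = (S.card : ℝ) * (1 - γ / 2) := by
    have hγ' : ∑ ω, (if φ (Xcf ω) ∧ ¬φ (X ω) then p ω else 0) = γ := hγ
    have : ∑ ω, ((if φ (Xcf ω) ∧ ¬φ (X ω) then (1/2 : ℝ) else 1) * (S.card : ℝ)) * p ω
        = (S.card : ℝ) * ∑ ω, (p ω - (1/2) * (if φ (Xcf ω) ∧ ¬φ (X ω) then p ω else 0)) := by
      rw [Finset.mul_sum]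
      refine Finset.sum_congr rfl fun ω _ => ?_
      split_ifs with hc <;> ring
    rw [this, Finset.sum_sub_distrib, hsum, ← Finset.mul_sum, hγ']
    ring
  calc (1 / (S.card : ℝ)) * ∑ g ∈ S, Pr p (fun ω => g (X ω) ≠ g (Xcf ω))
      ≤ (1 / (S.card : ℝ)) * ((S.card : ℝ) * (1 - γ / 2)) := by
        apply mul_le_mul_of_nonneg_left _ (by positivity)
        rw [hswap, ← hsum2]
        exact Finset.sum_le_sum fun ω _ => hbound ω
    _ = 1 - γ / 2 := by field_simp
end
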